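/- arXiv:2001.09862 — 4 statements merged into one kernel-verified Lean document; each statement's English description precedes it below -/
import Mathlib

section
/- Let $R$ be a commutative ring, $M$ an $R$-module, and $e \in R$ an idempotent with $e \neq 0, 1$. Then every prime submodule of $M = eM \oplus (1-e)M$ is of the form $P \oplus (1-e)M$ for a prime submodule $P$ of the $eR$-module $eM$, or of the form $eM \oplus Q$ for a prime submodule $Q$ of the $(1-e)R$-module $(1-e)M$. -/
open Submodule

section Defs
variable (R : Type*) [CommRing R] {M : Type*} [AddCommGroup M] [Module R M]

/-- `(N : M)`, the colon ideal of a submodule with the whole module. -/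
def colonTop (N : Submodule R M) : Ideal R := N.colon ⊤

variable {R}

/-- A prime submodule. -/
def IsPrimeSubmodule (P : Submodule R M) : Prop :=
  P ≠ ⊤ ∧ ∀ (r : R) (m : M), r • m ∈ P → r ∈ colonTop R P ∨ m ∈ P

/-- The prime spectrum of a module, as a set of submodules. -/
def specSet (R : Type*) [CommRing R] (M : Type*) [AddCommGroup M] [Module R M] :
    Set (Submodule R M) := {P | IsPrimeSubmodule P}

/-- `V(N)`. -/
def Vset (N : Submodule R M) : Set (Submodule R M) :=
  {P | IsPrimeSubmodule P ∧ colonTop R N ≤ colonTop R P}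

/-- `V^*(N)`. -/
def VstarSet (N : Submodule R M) : Set (Submodule R M) :=
  {P | IsPrimeSubmodule P ∧ N ≤ P}

/-- The product `NK = (N:M)(K:M)M` of two submodules. -/
def prodSub (N K : Submodule R M) : Submodule R M :=
  (colonTop R N * colonTop R K) • (⊤ : Submodule R M)

/-- The prime radical of a submodule. -/
def radicalSub (N : Submodule R M) : Submodule R M :=
  sInf {P | IsPrimeSubmodule P ∧ N ≤ P}

/-- Adjacency in the Zariski topology-graph `G(τ_T)`. -/
def ZAdj (T : Set (Submodule R M)) (N L : Submodule R M) : Prop :=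
  N ≠ L ∧ N ≠ ⊤ ∧ L ≠ ⊤ ∧ Vset N ∪ Vset L = T ∧ Vset N ≠ T ∧ Vset L ≠ T

/-- Vertices of the Zariski topology-graph `G(τ_T)`. -/
def ZVertex (T : Set (Submodule R M)) (N : Submodule R M) : Prop :=
  ∃ K, ZAdj T N K

/-- The Zariski topology-graph `G(τ_T)` as a simple graph on its vertex set. -/
def ZGraph (T : Set (Submodule R M)) : SimpleGraph {N : Submodule R M // ZVertex T N} where
  Adj a b := ZAdj T a.1 b.1
  symm := ⟨by
    rintro a b ⟨h1, h2, h3, h4, h5, h6⟩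
    exact ⟨h1.symm, h3, h2, by rwa [Set.union_comm], h6, h5⟩⟩
  loopless := ⟨by rintro a ⟨h1, -⟩; exact h1 rfl⟩

end Defs
section Extra
variable {R : Type*} [CommRing R] {M : Type*} [AddCommGroup M] [Module R M]

/-- Prime submodule of a submodule `W`, internal version (i.e. a prime submodule of the
module `W`). -/
def IsPrimeIn (W P : Submodule R M) : Prop :=
  P < W ∧ ∀ (r : R) (m : M), m ∈ W → r • m ∈ P → (∀ x ∈ W, r • x ∈ P) ∨ m ∈ P

/-- The prime radical of `N` computed inside the submodule `W`. -/
def radicalIn (W N : Submodule R M) : Submodule R M :=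
  sInf {P | IsPrimeIn W P ∧ N ≤ P} ⊓ W

/-- Vertices of the graph `AG(M)^*`. -/
def AGstarVertex (N : Submodule R M) : Prop :=
  N ≠ ⊤ ∧ colonTop R N ≠ Module.annihilator R M ∧
    ∃ K, K ≠ ⊤ ∧ colonTop R K ≠ Module.annihilator R M ∧ prodSub N K = ⊥

/-- Adjacency in the graph `AG(M)^*`. -/
def AGstarAdj (N L : Submodule R M) : Prop :=
  N ≠ L ∧ AGstarVertex N ∧ AGstarVertex L ∧ prodSub N L = ⊥

/-- The clique number of a graph, valued in `ℕ∞`. -/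
noncomputable def cliqueNumE {V : Type*} (G : SimpleGraph V) : ℕ∞ :=
  ⨆ n ∈ {n : ℕ | ∃ s, G.IsNClique n s}, (n : ℕ∞)

end Extra

/-! Since `e (1 - e) = 0` and the colon ideal `(P : M)` of a prime submodule is a prime ideal,
`(P : M)` contains `e` or `1 - e`; say `1 - e`. Then `(1 - e)M ≤ P`, and since
`eM + (1 - e)M = M`, the modular law gives `P = (P ∩ eM) + (1 - e)M`, where `P ∩ eM` is prime
in `eM` because `eM` is not contained in `P`. -/

section PrimeSubmodule

variable {R : Type*} [CommRing R] {M : Type*} [AddCommGroup M] [Module R M]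

theorem IsPrimeSubmodule.isPrime_colonTop {P : Submodule R M} (hP : IsPrimeSubmodule P) :
    (colonTop R P).IsPrime := by
  refine ⟨fun htop => hP.1 ?_, fun {a b} hab => ?_⟩
  · rw [colonTop, colon_eq_top_iff_subset] at htop
    exact eq_top_iff.mpr fun m _ => htop trivial
  · refine or_iff_not_imp_left.mpr fun ha => mem_colon.mpr fun m _ => ?_
    have habm : a • b • m ∈ P := by
      rw [← mul_smul]
      exact mem_colon.mp hab m trivial
    exact (hP.2 a (b • m) habm).resolve_left ha

theorem span_singleton_smul_top_le_of_mem_colonTop {P : Submodule R M} {a : R}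
    (ha : a ∈ colonTop R P) : Ideal.span {a} • (⊤ : Submodule R M) ≤ P := by
  rwa [ideal_span_singleton_smul, ← mem_colon_iff_le]

theorem span_singleton_smul_top_sup_one_sub (e : R) :
    Ideal.span {e} • (⊤ : Submodule R M) ⊔ Ideal.span {1 - e} • ⊤ = ⊤ := by
  have hunit : Ideal.span {e} ⊔ Ideal.span {1 - e} = ⊤ := by
    have h := add_mem_sup (Ideal.mem_span_singleton_self e) (Ideal.mem_span_singleton_self (1 - e))
    rwa [add_sub_cancel, ← Ideal.eq_top_iff_one] at h
  rw [← sup_smul, hunit, top_smul]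

theorem IsPrimeSubmodule.isPrimeIn_inf {P W : Submodule R M} (hP : IsPrimeSubmodule P)
    (hW : ¬ W ≤ P) : IsPrimeIn W (P ⊓ W) := by
  refine ⟨inf_le_right.lt_of_ne fun h => hW (h ▸ inf_le_left), fun r m hm hrm => ?_⟩
  rcases hP.2 r m hrm.1 with hr | hmP
  · exact Or.inl fun x hx => ⟨mem_colon.mp hr x trivial, W.smul_mem r hx⟩
  · exact Or.inr ⟨hmP, hm⟩

theorem IsPrimeSubmodule.isPrimeIn_inf_and_eq_inf_sup {P N K : Submodule R M}
    (hP : IsPrimeSubmodule P) (hNK : N ⊔ K = ⊤) (hK : K ≤ P) :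
    IsPrimeIn N (P ⊓ N) ∧ P = P ⊓ N ⊔ K := by
  have hPeq : P = P ⊓ N ⊔ K := by rw [inf_sup_assoc_of_le _ hK, hNK, inf_top_eq]
  refine ⟨hP.isPrimeIn_inf fun hN => hP.1 ?_, hPeq⟩
  rw [eq_top_iff, ← hNK]
  exact sup_le hN hK

end PrimeSubmodule

theorem stmt1_general {R : Type*} [CommRing R] {M : Type*} [AddCommGroup M] [Module R M]
    (e : R) (he : IsIdempotentElem e)
    (M1 M2 : Submodule R M)
    (hM1 : M1 = Ideal.span {e} • (⊤ : Submodule R M))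
    (hM2 : M2 = Ideal.span {1 - e} • (⊤ : Submodule R M))
    (P : Submodule R M) (hP : IsPrimeSubmodule P) :
    (M2 ≤ P ∧ IsPrimeIn M1 (P ⊓ M1) ∧ P = (P ⊓ M1) ⊔ M2) ∨
      (M1 ≤ P ∧ IsPrimeIn M2 (P ⊓ M2) ∧ P = M1 ⊔ (P ⊓ M2)) := by
  have hsup : M1 ⊔ M2 = ⊤ := hM1 ▸ hM2 ▸ span_singleton_smul_top_sup_one_sub e
  have horth : e * (1 - e) ∈ colonTop R P := by
    rw [he.mul_one_sub_self]
    exact zero_mem _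
  rcases hP.isPrime_colonTop.mem_or_mem horth with hPe | hPe'
  · have hM1P : M1 ≤ P := hM1 ▸ span_singleton_smul_top_le_of_mem_colonTop hPe
    obtain ⟨hprime, hPeq⟩ := hP.isPrimeIn_inf_and_eq_inf_sup (sup_comm M1 M2 ▸ hsup) hM1P
    exact Or.inr ⟨hM1P, hprime, hPeq.trans (sup_comm _ _)⟩
  · have hM2P : M2 ≤ P := hM2 ▸ span_singleton_smul_top_le_of_mem_colonTop hPe'
    exact Or.inl ⟨hM2P, hP.isPrimeIn_inf_and_eq_inf_sup hsup hM2P⟩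

/-- prime submodules of `M = eM ⊕ (1-e)M` are of the form `P ⊕ (1-e)M`
with `P` prime in `eM`, or `eM ⊕ Q` with `Q` prime in `(1-e)M`. -/
theorem stmt1 {R : Type*} [CommRing R] {M : Type*} [AddCommGroup M] [Module R M]
    (e : R) (he : IsIdempotentElem e) (he0 : e ≠ 0) (he1 : e ≠ 1)
    (M1 M2 : Submodule R M)
    (hM1 : M1 = Ideal.span {e} • (⊤ : Submodule R M))
    (hM2 : M2 = Ideal.span {1 - e} • (⊤ : Submodule R M))
    (P : Submodule R M) (hP : IsPrimeSubmodule P) :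
    (M2 ≤ P ∧ IsPrimeIn M1 (P ⊓ M1) ∧ P = (P ⊓ M1) ⊔ M2) ∨
      (M1 ≤ P ∧ IsPrimeIn M2 (P ⊓ M2) ∧ P = M1 ⊔ (P ⊓ M2)) :=
  stmt1_general e he M1 M2 hM1 hM2 P hP
end

section
/- Let $R$ be a commutative ring and $M$ an $R$-module. For any submodule $N$ of $M$, $V(N) = V(\sqrt{(N:M)M})$, where $V(N) = \{P \in Spec(M) : (P:M) \supseteq (N:M)\}$ and $\sqrt{K}$ denotes the prime radical of a submodule $K$. -/
open Submodule

/-- `V(N) = V(√((N:M)M))`. -/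
theorem stmt6 {R : Type*} [CommRing R] {M : Type*} [AddCommGroup M] [Module R M]
    (N : Submodule R M) :
    Vset N = Vset (radicalSub (colonTop R N • (⊤ : Submodule R M))) := by
  set K : Submodule R M := colonTop R N • ⊤ with hK
  have colon_mono : ∀ {A B : Submodule R M}, A ≤ B → colonTop R A ≤ colonTop R B := by
    intro A B h r hr
    rw [colonTop, Submodule.mem_colon] at hr ⊢
    exact fun p hp => h (hr p hp)
  have hNK : colonTop R N ≤ colonTop R K := by
    intro r hr
    rw [colonTop, Submodule.mem_colon]
    intro p hp
    exact Submodule.smul_mem_smul hr trivial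
  have hKrad : K ≤ radicalSub K := le_sInf fun P hP => hP.2
  ext P
  constructor
  · rintro ⟨hP, hle⟩
    refine ⟨hP, ?_⟩
    have hKP : K ≤ P := by
      rw [hK, Submodule.smul_le]
      intro r hr m hm
      have : r ∈ colonTop R P := hle hr
      rw [colonTop, Submodule.mem_colon] at this
      exact this m trivial
    have : radicalSub K ≤ P := sInf_le ⟨hP, hKP⟩
    exact colon_mono this
  · rintro ⟨hP, hle⟩
    exact ⟨hP, le_trans hNK (le_trans (colon_mono hKrad) hle)⟩
end

section
/- Let $M$ be an $R$-module and $T \subseteq Spec(M)$ nonempty with $Q = (\cap_{P \in T} P : M)M$. If submodules $N$ and $L$ of $M$ are adjacent in the Zariski topology-graph $G(\tau_T)$ (i.e., $N \neq L$, $V(N) \cup V(L) = T$, and $V(N), V(L) \neq T$), then $\sqrt{(N:M)M}/\cap_{P\in T}P$ and $\sqrt{(L:M)M}/\cap_{P\in T}P$ are adjacent vertices in the annihilating-submodule graph $AG(M/\cap_{P\in T}P)$. -/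
open Submodule

/- Both radicals are intersections of the primes they lie under: `√((N:M)M) = ⋂ V(N)`. Since
`V(N) ∪ V(L) = T`, the two radicals meet exactly in `J = ⋂ T`, while `V(N) ⊊ T` and `V(L) ⊊ T`
force both to be strictly larger than `J`. In `M/J` their images are therefore nonzero, distinct,
and meet in zero, and the product of two submodules lies in their intersection. -/

namespace Submodule

variable {R : Type*} [CommRing R] {M : Type*} [AddCommGroup M] [Module R M]

theorem map_mkQ_eq_bot_iff {J A : Submodule R M} : map J.mkQ A = ⊥ ↔ A ≤ J := by
  rw [← LinearMap.le_ker_iff_map, ker_mkQ]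

theorem map_mkQ_injective_of_le {J A B : Submodule R M} (hA : J ≤ A) (hB : J ≤ B)
    (h : map J.mkQ A = map J.mkQ B) : A = B := by
  simpa only [comap_map_mkQ, sup_eq_right.2 hA, sup_eq_right.2 hB] using
    congrArg (comap J.mkQ) h

theorem map_mkQ_inf_of_le {J A B : Submodule R M} (hA : J ≤ A) (hB : J ≤ B) :
    map J.mkQ (A ⊓ B) = map J.mkQ A ⊓ map J.mkQ B := by
  conv_rhs => rw [← map_comap_eq_of_surjective J.mkQ_surjective (map J.mkQ A ⊓ map J.mkQ B)]
  rw [comap_inf, comap_map_mkQ, comap_map_mkQ, sup_eq_right.2 hA, sup_eq_right.2 hB]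

end Submodule

section Zariski

variable {R : Type*} [CommRing R] {M : Type*} [AddCommGroup M] [Module R M]

theorem colonTop_smul_top_le (N : Submodule R M) : colonTop R N • (⊤ : Submodule R M) ≤ N :=
  smul_le.2 fun _ hr m _ => mem_colon.1 hr m trivial

theorem colonTop_smul_top_le_iff {N P : Submodule R M} :
    colonTop R N • (⊤ : Submodule R M) ≤ P ↔ colonTop R N ≤ colonTop R P :=
  ⟨fun h _ hr => mem_colon.2 fun _ _ => h (smul_mem_smul hr trivial),
    fun h => (smul_mono_left h).trans (colonTop_smul_top_le P)⟩

theorem radicalSub_colonTop_smul_top (N : Submodule R M) :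
    radicalSub (colonTop R N • (⊤ : Submodule R M)) = sInf (Vset N) := by
  unfold radicalSub Vset
  simp only [colonTop_smul_top_le_iff]

theorem sInf_Vset_ne_of_ssubset {T : Set (Submodule R M)} (hT : T ⊆ specSet R M)
    {N : Submodule R M} (hN : Vset N ⊂ T) : sInf (Vset N) ≠ sInf T := by
  obtain ⟨Q, hQT, hQN⟩ := Set.exists_of_ssubset hN
  intro h
  have hNQ : colonTop R N • (⊤ : Submodule R M) ≤ Q :=
    calc colonTop R N • ⊤ ≤ sInf (Vset N) := le_sInf fun P hP => colonTop_smul_top_le_iff.2 hP.2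
      _ = sInf T := h
      _ ≤ Q := sInf_le hQT
  exact hQN ⟨hT hQT, colonTop_smul_top_le_iff.1 hNQ⟩

theorem prodSub_le_inf (X Y : Submodule R M) : prodSub X Y ≤ X ⊓ Y :=
  le_inf ((smul_mono_left Ideal.mul_le_left).trans (colonTop_smul_top_le X))
    ((smul_mono_left Ideal.mul_le_right).trans (colonTop_smul_top_le Y))

theorem map_mkQ_adj_of_inf_eq {J A B : Submodule R M} (hJA : J ≤ A) (hJB : J ≤ B)
    (hAB : A ⊓ B = J) (hA : A ≠ J) (hB : B ≠ J) :
    map J.mkQ A ≠ map J.mkQ B ∧ map J.mkQ A ≠ ⊥ ∧ map J.mkQ B ≠ ⊥ ∧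
      prodSub (map J.mkQ A) (map J.mkQ B) = ⊥ := by
  refine ⟨fun h => hA ?_, fun h => hA ?_, fun h => hB ?_, ?_⟩
  · rw [← hAB, ← map_mkQ_injective_of_le hJA hJB h, inf_idem]
  · exact le_antisymm (map_mkQ_eq_bot_iff.1 h) hJA
  · exact le_antisymm (map_mkQ_eq_bot_iff.1 h) hJB
  · refine le_bot_iff.1 ((prodSub_le_inf _ _).trans ?_)
    rw [← map_mkQ_inf_of_le hJA hJB, hAB, map_mkQ_eq_bot_iff.2 le_rfl]

end Zariski

theorem stmt7_general {R : Type*} [CommRing R] {M : Type*} [AddCommGroup M] [Module R M]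
    (T : Set (Submodule R M)) (hTs : T ⊆ specSet R M)
    (J : Submodule R M) (hJ : J = sInf T)
    (N L : Submodule R M) (h : ZAdj T N L) :
    Submodule.map J.mkQ (radicalSub (colonTop R N • (⊤ : Submodule R M))) ≠
        Submodule.map J.mkQ (radicalSub (colonTop R L • (⊤ : Submodule R M))) ∧
      Submodule.map J.mkQ (radicalSub (colonTop R N • (⊤ : Submodule R M))) ≠ ⊥ ∧
      Submodule.map J.mkQ (radicalSub (colonTop R L • (⊤ : Submodule R M))) ≠ ⊥ ∧
      prodSub (Submodule.map J.mkQ (radicalSub (colonTop R N • (⊤ : Submodule R M))))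
        (Submodule.map J.mkQ (radicalSub (colonTop R L • (⊤ : Submodule R M)))) = ⊥ := by
  obtain ⟨-, -, -, hunion, hVN, hVL⟩ := h
  have hNT : Vset N ⊆ T := hunion ▸ Set.subset_union_left
  have hLT : Vset L ⊆ T := hunion ▸ Set.subset_union_right
  subst hJ
  rw [radicalSub_colonTop_smul_top, radicalSub_colonTop_smul_top]
  exact map_mkQ_adj_of_inf_eq (sInf_le_sInf hNT) (sInf_le_sInf hLT)
    (by rw [← sInf_union, hunion]) (sInf_Vset_ne_of_ssubset hTs (hNT.ssubset_of_ne hVN))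
    (sInf_Vset_ne_of_ssubset hTs (hLT.ssubset_of_ne hVL))

/-- if `N, L` are adjacent in `G(τ_T)`, then the images of
`√((N:M)M)` and `√((L:M)M)` in `M/∩_{P∈T}P` are adjacent vertices of the
annihilating-submodule graph `AG(M/∩_{P∈T}P)` (they are distinct, nonzero, and
their product is zero). -/
theorem stmt7 {R : Type*} [CommRing R] {M : Type*} [AddCommGroup M] [Module R M]
    (T : Set (Submodule R M)) (hT : T.Nonempty) (hTs : T ⊆ specSet R M)
    (J : Submodule R M) (hJ : J = sInf T)
    (N L : Submodule R M) (h : ZAdj T N L) :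
    Submodule.map J.mkQ (radicalSub (colonTop R N • (⊤ : Submodule R M))) ≠
        Submodule.map J.mkQ (radicalSub (colonTop R L • (⊤ : Submodule R M))) ∧
      Submodule.map J.mkQ (radicalSub (colonTop R N • (⊤ : Submodule R M))) ≠ ⊥ ∧
      Submodule.map J.mkQ (radicalSub (colonTop R L • (⊤ : Submodule R M))) ≠ ⊥ ∧
      prodSub (Submodule.map J.mkQ (radicalSub (colonTop R N • (⊤ : Submodule R M))))
        (Submodule.map J.mkQ (radicalSub (colonTop R L • (⊤ : Submodule R M)))) = ⊥ :=
  stmt7_general T hTs J hJ N L h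
end

section
/- If the Zariski topology-graph $G(\tau_T)$ of an $R$-module $M$ is a tree (connected with no cycles), then $G(\tau_T)$ is a star graph, i.e., there is a vertex adjacent to all other vertices and no other edges exist. -/
open Submodule

section StarAux

open SimpleGraph

private lemma star_no_triangle {V : Type*} {G : SimpleGraph V} (hG : G.IsAcyclic) {a b c : V}
    (h1 : G.Adj a b) (h2 : G.Adj b c) (h3 : G.Adj c a) : False := by
  have hc : (Walk.cons h1 (Walk.cons h2 (Walk.cons h3 Walk.nil))).IsCycle := by
    simp [Walk.isCycle_def, Walk.isTrail_def, List.nodup_cons, h1.ne, h2.ne, h3.ne,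
      h1.ne', h2.ne', h3.ne', (h3.ne : c ≠ a)]
  exact hG _ hc

private lemma star_no_square {V : Type*} {G : SimpleGraph V} (hG : G.IsAcyclic) {a b c d : V}
    (h1 : G.Adj a b) (h2 : G.Adj b c) (h3 : G.Adj c d) (h4 : G.Adj d a)
    (hac : a ≠ c) (hbd : b ≠ d) : False := by
  have hc : (Walk.cons h1 (Walk.cons h2 (Walk.cons h3 (Walk.cons h4 Walk.nil)))).IsCycle := by
    simp [Walk.isCycle_def, Walk.isTrail_def, List.nodup_cons, h1.ne, h2.ne, h3.ne, h4.ne,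
      h1.ne', h2.ne', h3.ne', h4.ne', hac, hbd, hac.symm, hbd.symm]
  exact hG _ hc

private lemma star_exists_common {V : Type*} {G : SimpleGraph V} (hconn : G.Connected)
    (H : ∀ a b c d : V, G.Adj a b → G.Adj b c → G.Adj c d → a ≠ c → b ≠ d → a ≠ d → False)
    {u v : V} (huv : u ≠ v) (hna : ¬ G.Adj u v) : ∃ w, G.Adj u w ∧ G.Adj w v := by
  classical
  obtain ⟨w⟩ := hconn u v
  obtain ⟨p, hp⟩ := w.toPath
  match p, hp with
  | .nil, _ => exact absurd rfl huv
  | .cons h .nil, _ => exact absurd h hna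
  | .cons h (.cons h' .nil), _ => exact ⟨_, h, h'⟩
  | .cons (v := x1) h (.cons (v := x2) h' (.cons (v := x3) h'' q)), hp =>
      exact absurd (H u x1 x2 x3 h h' h''
        (by rw [Walk.isPath_def] at hp
            simp only [Walk.support_cons, List.nodup_cons, List.mem_cons] at hp
            exact fun e => hp.1 (Or.inr (Or.inl e)))
        (by rw [Walk.isPath_def] at hp
            simp only [Walk.support_cons, List.nodup_cons, List.mem_cons] at hp
            intro e; exact hp.2.1 (by rw [e]; simp [Walk.start_mem_support]))
        (by rw [Walk.isPath_def] at hp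
            simp only [Walk.support_cons, List.nodup_cons, List.mem_cons] at hp
            intro e; exact hp.1 (by rw [e]; simp [Walk.start_mem_support]))) not_false

variable {R : Type*} [CommRing R] {M : Type*} [AddCommGroup M] [Module R M]

private lemma star_colonTop_mono {a b : Submodule R M} (h : a ≤ b) :
    colonTop R a ≤ colonTop R b := by
  intro r hr
  rw [colonTop, Submodule.mem_colon] at *
  exact fun p hp => h (hr p hp)

private lemma star_colonTop_inf (a d : Submodule R M) :
    colonTop R (a ⊓ d) = colonTop R a ⊓ colonTop R d := by
  ext r
  simp [colonTop, Submodule.mem_colon, Submodule.mem_inf, forall_and]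

private lemma star_Vset_inf (a d : Submodule R M) : Vset (a ⊓ d) = Vset a ∪ Vset d := by
  ext P
  constructor
  · rintro ⟨hP, hle⟩
    rw [star_colonTop_inf] at hle
    by_cases hca : colonTop R a ≤ colonTop R P
    · exact Or.inl ⟨hP, hca⟩
    · refine Or.inr ⟨hP, ?_⟩
      obtain ⟨r, hra, hrP⟩ := SetLike.not_le_iff_exists.mp hca
      intro s hs
      rw [colonTop, Submodule.mem_colon]
      intro m _
      have hrs : r * s ∈ colonTop R a ⊓ colonTop R d :=
        ⟨Ideal.mul_mem_right _ _ hra, Ideal.mul_mem_left _ _ hs⟩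
      have h1 : (r * s) • m ∈ P := by
        have := hle hrs
        rw [colonTop, Submodule.mem_colon] at this
        exact this m trivial
      rw [mul_smul] at h1
      rcases hP.2 r (s • m) h1 with h | h
      · exact absurd h hrP
      · exact h
  · rintro (⟨hP, h⟩ | ⟨hP, h⟩)
    · exact ⟨hP, le_trans (star_colonTop_mono inf_le_left) h⟩
    · exact ⟨hP, le_trans (star_colonTop_mono inf_le_right) h⟩

private lemma star_key {T : Set (Submodule R M)} {a b c d : Submodule R M}
    (hab : ZAdj T a b) (hbc : ZAdj T b c) (hcd : ZAdj T c d)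
    (had : Vset a ∪ Vset d ≠ T) :
    ZAdj T (a ⊓ d) b ∧ ZAdj T (a ⊓ d) c := by
  obtain ⟨-, hat, hbt, hUab, hVa, hVb⟩ := hab
  obtain ⟨-, -, hct, hUbc, -, hVc⟩ := hbc
  obtain ⟨-, -, hdt, hUcd, -, hVd⟩ := hcd
  have hVf : Vset (a ⊓ d) = Vset a ∪ Vset d := star_Vset_inf a d
  have haT : Vset a ⊆ T := hUab ▸ Set.subset_union_left
  have hbT : Vset b ⊆ T := hUab ▸ Set.subset_union_right
  have hcT : Vset c ⊆ T := hUbc ▸ Set.subset_union_right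
  have hdT : Vset d ⊆ T := hUcd ▸ Set.subset_union_right
  have hft : a ⊓ d ≠ ⊤ := fun e => hat (top_le_iff.mp (e ▸ inf_le_left))
  have hVfne : Vset (a ⊓ d) ≠ T := hVf ▸ had
  constructor
  · refine ⟨?_, hft, hbt, ?_, hVfne, hVb⟩
    · intro e
      apply had
      rw [← hUab, ← e, hVf]
      ext P
      simp only [Set.mem_union]
      tauto
    · rw [hVf]
      apply subset_antisymm
      · exact Set.union_subset (Set.union_subset haT hdT) hbT
      · rw [← hUab]; intro P hP
        rcases hP with h | h
        · exact Or.inl (Or.inl h)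
        · exact Or.inr h
  · refine ⟨?_, hft, hct, ?_, hVfne, hVc⟩
    · intro e
      apply had
      rw [← hUcd, ← e, hVf]
      ext P
      simp only [Set.mem_union]
      tauto
    · rw [hVf]
      apply subset_antisymm
      · exact Set.union_subset (Set.union_subset haT hdT) hcT
      · rw [← hUcd]; intro P hP
        rcases hP with h | h
        · exact Or.inr h
        · exact Or.inl (Or.inr h)

end StarAux

/-- if `G(τ_T)` is a tree, then it is a star graph. -/
theorem stmt10 {R : Type*} [CommRing R] {M : Type*} [AddCommGroup M] [Module R M]
    (T : Set (Submodule R M)) (hT : T.Nonempty)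
    (h : (ZGraph T).IsTree) :
    ∃ c : {N : Submodule R M // ZVertex T N},
      (∀ v, v ≠ c → (ZGraph T).Adj c v) ∧
      (∀ u v, (ZGraph T).Adj u v → u = c ∨ v = c) := by
  classical
  have hA := h.IsAcyclic
  have hconn := h.isConnected
  have H : ∀ a b c d : {N : Submodule R M // ZVertex T N},
      (ZGraph T).Adj a b → (ZGraph T).Adj b c → (ZGraph T).Adj c d →
      a ≠ c → b ≠ d → a ≠ d → False := by
    intro a b c d hab hbc hcd hac hbd had
    by_cases hadj : (ZGraph T).Adj a d
    · exact star_no_square hA hab hbc hcd hadj.symm hac hbd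
    · have hVad : Vset a.1 ∪ Vset d.1 ≠ T := by
        intro e
        apply hadj
        obtain ⟨Ka, ⟨-, hat, -, -, hVa, -⟩⟩ := a.2
        obtain ⟨Kd, ⟨-, hdt, -, -, hVd, -⟩⟩ := d.2
        exact ⟨fun e' => had (Subtype.ext e'), hat, hdt, e, hVa, hVd⟩
      obtain ⟨k1, k2⟩ := star_key hab hbc hcd hVad
      have fvert : ZVertex T (a.1 ⊓ d.1) := ⟨b.1, k1⟩
      have e1 : (ZGraph T).Adj ⟨a.1 ⊓ d.1, fvert⟩ b := k1
      have e2 : (ZGraph T).Adj ⟨a.1 ⊓ d.1, fvert⟩ c := k2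
      exact star_no_triangle hA e1 hbc e2.symm
  by_cases hE : ∀ u v : {N : Submodule R M // ZVertex T N}, ¬ (ZGraph T).Adj u v
  · have hsub : ∀ u v : {N : Submodule R M // ZVertex T N}, u = v := by
      intro u v
      obtain ⟨w⟩ := hconn u v
      cases w with
      | nil => rfl
      | cons h' _ => exact absurd h' (hE _ _)
    obtain ⟨v⟩ := hconn.nonempty
    exact ⟨v, fun u hu => absurd (hsub u v) hu, fun u w huw => absurd huw (hE _ _)⟩
  · push_neg at hE
    obtain ⟨x, y, hxy⟩ := hE
    by_cases Q : ∀ z, z ≠ x → (ZGraph T).Adj x z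
    · refine ⟨x, fun v hv => Q v hv, ?_⟩
      intro u v huv
      by_contra hcon
      push_neg at hcon
      exact star_no_triangle hA (Q u hcon.1) huv (Q v hcon.2).symm
    · push_neg at Q
      obtain ⟨z, hzx, hnz⟩ := Q
      have hzy : z ≠ y := fun e => hnz (e ▸ hxy)
      have hyadj : ∀ v, v ≠ y → (ZGraph T).Adj y v := by
        intro v hvy
        by_cases hvx : v = x
        · exact hvx ▸ hxy.symm
        by_contra hnyv
        obtain ⟨w, hyw, hwv⟩ := star_exists_common hconn H (Ne.symm hvy) hnyv
        by_cases hwx : w = x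
        · have hxv : (ZGraph T).Adj x v := hwx ▸ hwv
          obtain ⟨w', hxw', hw'z⟩ := star_exists_common hconn H (Ne.symm hzx) hnz
          by_cases hw'y : w' = y
          · have hyz : (ZGraph T).Adj y z := hw'y ▸ hw'z
            have hvz : v ≠ z := fun e => hnz (e ▸ hxv)
            exact H v x y z hxv.symm hxy hyz hvy (Ne.symm hzx) hvz
          · exact H z w' x y hw'z.symm hxw'.symm hxy hzx hw'y hzy
        · exact H x y w v hxy hyw hwv (fun e => hwx e.symm) (Ne.symm hvy)
            (fun e => hvx e.symm)
      refine ⟨y, hyadj, ?_⟩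
      intro u v huv
      by_contra hcon
      push_neg at hcon
      exact star_no_triangle hA (hyadj u hcon.1) huv (hyadj v hcon.2).symm
end
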